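/- There exists ε₀ > 0 such that for all 0 < ε ≤ ε₀: if λ₁ ≠ λ₂ are real numbers and u₁, u₂ ∈ C²([0,1]) satisfy φ₂u_i'' + φ₁u_i' = λ_i u_i on [0,1] for i = 1,2, then ∫_{x₀}^{1−x₀} w(x)·u₁(x)·u₂(x) dx = 0; that is, eigenfunctions of D_ε corresponding to distinct eigenvalues are orthogonal in the weighted space L²((x₀,1−x₀), w(x)dx). -/

import Mathlib

open Real Set Filter Topology MeasureTheory

/-- The degenerate point `x₀ = (2 − √3)ε`. -/
noncomputable def x0 (ε : ℝ) : ℝ := (2 - Real.sqrt 3) * ε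

/-- Leading coefficient `φ₂` of `D_ε` on the interval. -/
noncomputable def phi2 (ε x : ℝ) : ℝ :=
  if x ≤ ε then (1/12) * (1 - 4*(x/ε) + (x/ε)^2)
  else if x ≤ 1 - ε then -(1/6)
  else (1/12) * (1 - 4*((1-x)/ε) + ((1-x)/ε)^2)

/-- First-order coefficient `φ₁` of `D_ε` on the interval. -/
noncomputable def phi1 (ε x : ℝ) : ℝ :=
  if x ≤ ε then -6 * (1 - x/ε) * ((1 + x/ε)^3)⁻¹
  else if x ≤ 1 - ε then 0
  else 6 * (1 - (1-x)/ε) * ((1 + (1-x)/ε)^3)⁻¹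

/-- Integration-factor function `g` on `[0, ε]`. -/
noncomputable def gfun (ε x : ℝ) : ℝ :=
  Real.sign (x - x0 ε) * |x - x0 ε| ^ ((4 + 2*Real.sqrt 3) * ε) *
    |x - 4*ε + x0 ε| ^ ((4 - 2*Real.sqrt 3) * ε) *
    (x + ε) ^ (-(8*ε)) *
    Real.exp (12*ε^3/(ε+x)^2 + 12*ε^2/(ε+x))

/-- Sturm–Liouville principal coefficient `p`. -/
noncomputable def pfun (ε x : ℝ) : ℝ :=
  if x ≤ ε then gfun ε x / (6 * gfun ε ε)
  else if x ≤ 1 - ε then 1/6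
  else gfun ε (1-x) / (6 * gfun ε ε)

/-- Sturm–Liouville weight `w = -p/φ₂`. -/
noncomputable def wfun (ε x : ℝ) : ℝ := -pfun ε x / phi2 ε x

/-!
The principal coefficient `p` is an integrating factor for `D_ε`: away from `ε` and `1 - ε` it
satisfies `p' φ₂ = p φ₁`, because on `(x₀, ε)` the logarithmic derivative of `g` is `φ₁ / φ₂`.
Hence `p D_ε u = φ₂ (p u')'`, and Lagrange's identity gives `(p W)' = (λ₁ - λ₂) w u₁ u₂` for the
Wronskian `W = u₁ u₂' - u₁' u₂`. Integrating over `[x₀, 1 - x₀]`, where `p` vanishes at both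
ends (`g` has a zero at `x₀`), proves the orthogonality. Near `x₀` the weight behaves like
`(x - x₀) ^ ((4 + 2√3) ε - 1)`, which is integrable, and the layer at `1 - x₀` is the mirror image
of the one at `x₀` under `x ↦ 1 - x`.
-/

theorem integral_weight_mul_mul_eq_zero_of_eigenvalue_ne {a b : ℝ} (hab : a ≤ b) {s : Set ℝ}
    (hs : s.Countable) {p φ₁ φ₂ u₁ u₁' u₁'' u₂ u₂' u₂'' : ℝ → ℝ} {lam₁ lam₂ : ℝ}
    (hne : lam₁ ≠ lam₂) (hpc : ContinuousOn p (Icc a b)) (hpa : p a = 0) (hpb : p b = 0)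
    (hp : ∀ x ∈ Ioo a b \ s, HasDerivAt p (p x * φ₁ x / φ₂ x) x)
    (hφ₂ : ∀ x ∈ Ioo a b \ s, φ₂ x ≠ 0)
    (hu₁ : ∀ x ∈ Icc a b, HasDerivAt u₁ (u₁' x) x)
    (hu₁' : ∀ x ∈ Icc a b, HasDerivAt u₁' (u₁'' x) x)
    (hu₂ : ∀ x ∈ Icc a b, HasDerivAt u₂ (u₂' x) x)
    (hu₂' : ∀ x ∈ Icc a b, HasDerivAt u₂' (u₂'' x) x)
    (hode₁ : ∀ x ∈ Ioo a b \ s, φ₂ x * u₁'' x + φ₁ x * u₁' x = lam₁ * u₁ x)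
    (hode₂ : ∀ x ∈ Ioo a b \ s, φ₂ x * u₂'' x + φ₁ x * u₂' x = lam₂ * u₂ x)
    (hint : IntervalIntegrable (fun x => -p x / φ₂ x * u₁ x * u₂ x) volume a b) :
    ∫ x in a..b, -p x / φ₂ x * u₁ x * u₂ x = 0 := by
  have hcont : ∀ {v v' : ℝ → ℝ}, (∀ x ∈ Icc a b, HasDerivAt v (v' x) x) →
      ContinuousOn v (Icc a b) :=
    fun hv x hx => (hv x hx).continuousAt.continuousWithinAt
  have lagrange : ∀ x ∈ Ioo a b \ s,
      HasDerivAt (fun x => p x * (u₁ x * u₂' x - u₁' x * u₂ x))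
        ((lam₁ - lam₂) * (-p x / φ₂ x * u₁ x * u₂ x)) x := by
    intro x hx
    have hx' : x ∈ Icc a b := Ioo_subset_Icc_self hx.1
    refine ((hp x hx).mul (((hu₁ x hx').mul (hu₂' x hx')).sub
      ((hu₁' x hx').mul (hu₂ x hx')))).congr_deriv ?_
    simp only [Pi.mul_apply, Pi.sub_apply]
    field_simp [hφ₂ x hx]
    linear_combination (p x * u₁ x) * hode₂ x hx - (p x * u₂ x) * hode₁ x hx
  have ftc := integral_eq_of_hasDerivAt_off_countable_of_le _ _ hab hs
    (hpc.mul (((hcont hu₁).mul (hcont hu₂')).sub ((hcont hu₁').mul (hcont hu₂))))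
    lagrange (hint.const_mul _)
  rw [intervalIntegral.integral_const_mul] at ftc
  simp only [Pi.mul_apply, hpa, hpb, zero_mul, sub_zero] at ftc
  exact (mul_eq_zero.1 ftc).resolve_left (sub_ne_zero.2 hne)

lemma one_lt_sqrt_three : 1 < √3 := by
  rw [Real.lt_sqrt zero_le_one]; norm_num

lemma sqrt_three_lt_two : √3 < 2 := by
  rw [Real.sqrt_lt' two_pos]; norm_num

noncomputable def x1 (ε : ℝ) : ℝ := (2 + √3) * ε

noncomputable def gReg (ε x : ℝ) : ℝ :=
  (x1 ε - x) ^ ((4 - 2 * √3) * ε) * (x + ε) ^ (-(8 * ε)) *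
    exp (12 * ε ^ 3 / (ε + x) ^ 2 + 12 * ε ^ 2 / (ε + x))

section
variable {ε x : ℝ}

lemma x0_pos (hε : 0 < ε) : 0 < x0 ε := by
  have := sqrt_three_lt_two; unfold x0; nlinarith

lemma x0_lt_self (hε : 0 < ε) : x0 ε < ε := by
  have := one_lt_sqrt_three; unfold x0; nlinarith

lemma self_lt_x1 (hε : 0 < ε) : ε < x1 ε := by
  have := one_lt_sqrt_three; unfold x1; nlinarith

lemma phi2_of_le (hε : 0 < ε) (hx : x ≤ ε) :
    phi2 ε x = (x - x0 ε) * (x - x1 ε) / (12 * ε ^ 2) := by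
  rw [phi2, if_pos hx, x0, x1]
  field_simp
  linear_combination ε ^ 2 * Real.sq_sqrt (zero_le_three (α := ℝ))

lemma phi1_of_le (hε : 0 < ε) (hx : x ≤ ε) (hx' : x + ε ≠ 0) :
    phi1 ε x = -6 * ε ^ 2 * (ε - x) / (x + ε) ^ 3 := by
  rw [phi1, if_pos hx, show 1 + x / ε = (x + ε) / ε by field_simp; ring]
  field_simp

/-- The right-hand side is the logarithmic derivative of `gfun ε`. -/
lemma phi1_div_phi2_of_mem_Ioo (hε : 0 < ε) (hx : x ∈ Ioo (x0 ε) ε) :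
    phi1 ε x / phi2 ε x = (4 + 2 * √3) * ε / (x - x0 ε) - (4 - 2 * √3) * ε / (x1 ε - x)
      - 8 * ε / (x + ε) - 24 * ε ^ 3 / (ε + x) ^ 3 - 12 * ε ^ 2 / (ε + x) ^ 2 := by
  have h0 := x0_pos hε
  have h1 : x - x0 ε ≠ 0 := (sub_pos.2 hx.1).ne'
  have h2 : x1 ε - x ≠ 0 := (sub_pos.2 (hx.2.trans (self_lt_x1 hε))).ne'
  have h2' : x - x1 ε ≠ 0 := fun h => h2 (by linarith)
  have h3 : x + ε ≠ 0 := by linarith [hx.1]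
  have h3' : ε + x ≠ 0 := by linarith [hx.1]
  rw [phi1_of_le hε hx.2.le h3, phi2_of_le hε hx.2.le]
  field_simp
  rw [x0, x1]
  have hs : √3 ^ 2 = 3 := Real.sq_sqrt zero_le_three
  have hs3 : √3 ^ 3 = 3 * √3 := by rw [pow_succ, hs]
  ring_nf
  simp only [hs, hs3]
  ring

lemma gfun_eq_of_mem_Icc (hε : 0 < ε) (hx : x ∈ Icc (x0 ε) (x1 ε)) :
    gfun ε x = (x - x0 ε) ^ ((4 + 2 * √3) * ε) * gReg ε x := by
  have hx1 : x - 4 * ε + x0 ε = -(x1 ε - x) := by rw [x0, x1]; ring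
  rw [gfun, gReg, hx1, abs_neg, abs_of_nonneg (sub_nonneg.2 hx.2)]
  rcases hx.1.eq_or_lt with h | h
  · have hA : (4 + 2 * √3) * ε ≠ 0 := by positivity
    simp [← h, Real.zero_rpow hA]
  · rw [Real.sign_of_pos (sub_pos.2 h), abs_of_pos (sub_pos.2 h)]
    ring

lemma gReg_pos (hx : x ∈ Ioo (-ε) (x1 ε)) : 0 < gReg ε x := by
  have h1 : 0 < x1 ε - x := sub_pos.2 hx.2
  have h2 : 0 < x + ε := by linarith [hx.1]
  unfold gReg
  positivity

lemma hasDerivAt_gReg (hx : x ∈ Ioo (-ε) (x1 ε)) :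
    HasDerivAt (gReg ε) (gReg ε x * (-(4 - 2 * √3) * ε / (x1 ε - x) - 8 * ε / (x + ε)
      - 24 * ε ^ 3 / (ε + x) ^ 3 - 12 * ε ^ 2 / (ε + x) ^ 2)) x := by
  have h1 : 0 < x1 ε - x := sub_pos.2 hx.2
  have h2 : 0 < x + ε := by linarith [hx.1]
  have h2' : ε + x ≠ 0 := by linarith [hx.1]
  have hlin := (hasDerivAt_id' x).const_add ε
  have hE := ((hasDerivAt_const x (12 * ε ^ 3)).div (hlin.pow 2) (pow_ne_zero 2 h2')).add
    ((hasDerivAt_const x (12 * ε ^ 2)).div hlin h2')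
  refine ((((hasDerivAt_id' x).const_sub (x1 ε)).rpow_const (Or.inl h1.ne')).mul
    (((hasDerivAt_id' x).add_const ε).rpow_const (Or.inl h2.ne')) |>.mul hE.exp).congr_deriv ?_
  simp only [gReg, Pi.add_apply, Pi.div_apply, Pi.pow_apply, Pi.mul_apply,
    Real.rpow_sub_one h1.ne', Real.rpow_sub_one h2.ne']
  field_simp
  ring

lemma continuousOn_gReg (hε : 0 < ε) : ContinuousOn (gReg ε) (Icc (x0 ε) ε) := fun y hy =>
  (hasDerivAt_gReg ⟨by linarith [x0_pos hε, hy.1], hy.2.trans_lt (self_lt_x1 hε)⟩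
    ).continuousAt.continuousWithinAt

lemma hasDerivAt_gfun (hε : 0 < ε) (hx : x ∈ Ioo (x0 ε) ε) :
    HasDerivAt (gfun ε) (gfun ε x * (phi1 ε x / phi2 ε x)) x := by
  have hx1 : x < x1 ε := hx.2.trans (self_lt_x1 hε)
  have h1 : 0 < x - x0 ε := sub_pos.2 hx.1
  have heq : (fun y => (y - x0 ε) ^ ((4 + 2 * √3) * ε) * gReg ε y) =ᶠ[𝓝 x] gfun ε := by
    filter_upwards [Ioo_mem_nhds hx.1 hx1] with y hy
    exact (gfun_eq_of_mem_Icc hε ⟨hy.1.le, hy.2.le⟩).symm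
  refine ((((hasDerivAt_id' x).sub_const (x0 ε)).rpow_const (Or.inl h1.ne')).mul
    (hasDerivAt_gReg ⟨by linarith [x0_pos hε], hx1⟩)).congr_of_eventuallyEq heq.symm
    |>.congr_deriv ?_
  rw [phi1_div_phi2_of_mem_Ioo hε hx, gfun_eq_of_mem_Icc hε ⟨hx.1.le, hx1.le⟩,
    Real.rpow_sub_one h1.ne']
  field_simp
  ring

end

section
variable {ε : ℝ}

lemma gfun_self_pos (hε : 0 < ε) : 0 < gfun ε ε := by
  rw [gfun_eq_of_mem_Icc hε ⟨(x0_lt_self hε).le, (self_lt_x1 hε).le⟩]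
  exact mul_pos (Real.rpow_pos_of_pos (sub_pos.2 (x0_lt_self hε)) _)
    (gReg_pos ⟨by linarith, self_lt_x1 hε⟩)

lemma phi2_one_sub (hε : 0 < ε) (hε' : ε ≤ 1 / 2) (x : ℝ) : phi2 ε (1 - x) = phi2 ε x := by
  unfold phi2
  split_ifs <;> first
    | rfl
    | (exfalso; linarith)
    | rw [sub_sub_cancel]
    | rw [show 1 - x = x by linarith]
    | (rw [show 1 - x = ε by linarith, div_self hε.ne']; norm_num)
    | (rw [show x = ε by linarith, div_self hε.ne']; norm_num)

lemma phi1_one_sub (hε : 0 < ε) (hε' : ε ≤ 1 / 2) (x : ℝ) : phi1 ε (1 - x) = -phi1 ε x := by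
  unfold phi1
  split_ifs <;> first
    | (exfalso; linarith)
    | (rw [sub_sub_cancel]; ring)
    | (rw [show 1 - x = ε by linarith, show x = ε by linarith, div_self hε.ne']; norm_num)
    | (rw [show 1 - x = ε by linarith, div_self hε.ne']; norm_num)
    | (rw [show x = ε by linarith, div_self hε.ne']; norm_num)
    | norm_num

lemma pfun_one_sub (hε : 0 < ε) (hε' : ε ≤ 1 / 2) (x : ℝ) : pfun ε (1 - x) = pfun ε x := by
  have hg := (gfun_self_pos hε).ne'
  unfold pfun
  split_ifs <;> first
    | rfl
    | (exfalso; linarith)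
    | rw [sub_sub_cancel]
    | rw [show 1 - x = x by linarith]
    | (rw [show 1 - x = ε by linarith]; field_simp)
    | (rw [show x = ε by linarith]; field_simp)

lemma wfun_one_sub (hε : 0 < ε) (hε' : ε ≤ 1 / 2) (x : ℝ) : wfun ε (1 - x) = wfun ε x := by
  rw [wfun, wfun, pfun_one_sub hε hε', phi2_one_sub hε hε']

variable {x : ℝ}

lemma phi2_neg_of_mem_Ioc (hε : 0 < ε) (hx : x ∈ Ioc (x0 ε) ε) : phi2 ε x < 0 := by
  rw [phi2_of_le hε hx.2]
  exact div_neg_of_neg_of_pos (mul_neg_of_pos_of_neg (sub_pos.2 hx.1)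
    (sub_neg.2 (hx.2.trans_lt (self_lt_x1 hε)))) (by positivity)

lemma phi2_of_mem_Icc (hε : 0 < ε) (hx : x ∈ Icc ε (1 - ε)) : phi2 ε x = -(1 / 6) := by
  rcases hx.1.eq_or_lt with rfl | h
  · rw [phi2, if_pos le_rfl, div_self hε.ne']; norm_num
  · rw [phi2, if_neg h.not_ge, if_pos hx.2]

lemma phi1_of_mem_Ioo (hx : x ∈ Ioo ε (1 - ε)) : phi1 ε x = 0 := by
  rw [phi1, if_neg hx.1.not_ge, if_pos hx.2.le]

lemma pfun_of_mem_Icc (hε : 0 < ε) (hx : x ∈ Icc ε (1 - ε)) : pfun ε x = 1 / 6 := by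
  rcases hx.1.eq_or_lt with rfl | h
  · rw [pfun, if_pos le_rfl]; field_simp [(gfun_self_pos hε).ne']
  · rw [pfun, if_neg h.not_ge, if_pos hx.2]

lemma wfun_of_mem_Icc (hε : 0 < ε) (hx : x ∈ Icc ε (1 - ε)) : wfun ε x = 1 := by
  rw [wfun, pfun_of_mem_Icc hε hx, phi2_of_mem_Icc hε hx]; norm_num

lemma phi2_neg (hε : 0 < ε) (hε' : ε ≤ 1 / 2) (hx : x ∈ Ioo (x0 ε) (1 - x0 ε)) :
    phi2 ε x < 0 := by
  rcases le_or_gt x ε with h | h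
  · exact phi2_neg_of_mem_Ioc hε ⟨hx.1, h⟩
  rcases le_or_gt x (1 - ε) with h' | h'
  · rw [phi2_of_mem_Icc hε ⟨h.le, h'⟩]; norm_num
  · rw [← phi2_one_sub hε hε']
    exact phi2_neg_of_mem_Ioc hε ⟨by linarith [hx.2], by linarith⟩

lemma pfun_x0 (hε : 0 < ε) : pfun ε (x0 ε) = 0 := by
  simp [pfun, if_pos (x0_lt_self hε).le, gfun]

lemma pfun_one_sub_x0 (hε : 0 < ε) (hε' : ε ≤ 1 / 2) : pfun ε (1 - x0 ε) = 0 := by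
  rw [pfun_one_sub hε hε', pfun_x0 hε]

lemma hasDerivAt_pfun_of_mem_Ioo (hε : 0 < ε) (hx : x ∈ Ioo (x0 ε) ε) :
    HasDerivAt (pfun ε) (pfun ε x * phi1 ε x / phi2 ε x) x := by
  have heq : (fun y => gfun ε y / (6 * gfun ε ε)) =ᶠ[𝓝 x] pfun ε := by
    filter_upwards [Iio_mem_nhds hx.2] with y hy
    rw [pfun, if_pos hy.le]
  refine ((hasDerivAt_gfun hε hx).div_const _).congr_of_eventuallyEq heq.symm |>.congr_deriv ?_
  rw [pfun, if_pos hx.2.le]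
  ring

lemma hasDerivAt_pfun (hε : 0 < ε) (hε' : ε ≤ 1 / 2)
    (hx : x ∈ Ioo (x0 ε) (1 - x0 ε) \ {ε, 1 - ε}) :
    HasDerivAt (pfun ε) (pfun ε x * phi1 ε x / phi2 ε x) x := by
  obtain ⟨⟨hx0, hx1⟩, hxs⟩ := hx
  simp only [mem_insert_iff, mem_singleton_iff, not_or] at hxs
  rcases lt_or_gt_of_ne hxs.1 with h | h
  · exact hasDerivAt_pfun_of_mem_Ioo hε ⟨hx0, h⟩
  rcases lt_or_gt_of_ne hxs.2 with h' | h'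
  · have heq : (fun _ => 1 / 6) =ᶠ[𝓝 x] pfun ε := by
      filter_upwards [Ioo_mem_nhds h h'] with y hy
      exact (pfun_of_mem_Icc hε ⟨hy.1.le, hy.2.le⟩).symm
    rw [phi1_of_mem_Ioo ⟨h, h'⟩, mul_zero, zero_div]
    exact (hasDerivAt_const x _).congr_of_eventuallyEq heq.symm
  · have hrefl : pfun ε ∘ (fun y => 1 - y) = pfun ε := funext (pfun_one_sub hε hε')
    have := (hasDerivAt_pfun_of_mem_Ioo hε (x := 1 - x) ⟨by linarith, by linarith⟩).comp x
      ((hasDerivAt_id' x).const_sub 1)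
    rw [hrefl, pfun_one_sub hε hε', phi1_one_sub hε hε', phi2_one_sub hε hε'] at this
    exact this.congr_deriv (by ring)

lemma continuousOn_pfun_left (hε : 0 < ε) : ContinuousOn (pfun ε) (Icc (x0 ε) ε) := by
  have hA : 0 ≤ (4 + 2 * √3) * ε := by positivity
  have hcont : ContinuousOn (fun y => (y - x0 ε) ^ ((4 + 2 * √3) * ε) * gReg ε y / (6 * gfun ε ε))
      (Icc (x0 ε) ε) :=
    ((ContinuousOn.rpow_const (by fun_prop) fun _ _ => Or.inr hA).mul (continuousOn_gReg hε)
      ).div_const _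
  refine hcont.congr fun y hy => ?_
  rw [pfun, if_pos hy.2, gfun_eq_of_mem_Icc hε ⟨hy.1, hy.2.trans (self_lt_x1 hε).le⟩]

lemma continuousOn_pfun (hε : 0 < ε) (hε' : ε ≤ 1 / 2) :
    ContinuousOn (pfun ε) (Icc (x0 ε) (1 - x0 ε)) := by
  have hx0 := x0_lt_self hε
  have hmid : ContinuousOn (pfun ε) (Icc ε (1 - ε)) :=
    continuousOn_const.congr fun y hy => pfun_of_mem_Icc hε hy
  have hright : ContinuousOn (pfun ε) (Icc (1 - ε) (1 - x0 ε)) := by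
    rw [← funext (pfun_one_sub hε hε')]
    exact (continuousOn_pfun_left hε).comp (continuousOn_const.sub continuousOn_id)
      fun y hy => ⟨by linarith [hy.2], by linarith [hy.1]⟩
  rw [← Icc_union_Icc_eq_Icc (hx0.le.trans (by linarith : ε ≤ 1 - ε)) (by linarith),
    ← Icc_union_Icc_eq_Icc hx0.le (by linarith)]
  exact ((continuousOn_pfun_left hε).union_of_isClosed hmid isClosed_Icc isClosed_Icc
    ).union_of_isClosed hright (isClosed_Icc.union isClosed_Icc) isClosed_Icc

lemma wfun_of_mem_Ioc (hε : 0 < ε) (hx : x ∈ Ioc (x0 ε) ε) :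
    wfun ε x = (x - x0 ε) ^ ((4 + 2 * √3) * ε - 1) *
      (2 * ε ^ 2 * gReg ε x / (gfun ε ε * (x1 ε - x))) := by
  have h1 : x - x0 ε ≠ 0 := (sub_pos.2 hx.1).ne'
  have h2 : x1 ε - x ≠ 0 := (sub_pos.2 (hx.2.trans_lt (self_lt_x1 hε))).ne'
  have h2' : x - x1 ε ≠ 0 := fun h => h2 (by linarith)
  have hg := (gfun_self_pos hε).ne'
  rw [wfun, pfun, if_pos hx.2, phi2_of_le hε hx.2,
    gfun_eq_of_mem_Icc hε ⟨hx.1.le, hx.2.trans (self_lt_x1 hε).le⟩, Real.rpow_sub_one h1]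
  field_simp
  ring

lemma intervalIntegrable_wfun_mul_left (hε : 0 < ε) {q : ℝ → ℝ}
    (hq : ContinuousOn q (Icc (x0 ε) ε)) :
    IntervalIntegrable (fun x => wfun ε x * q x) volume (x0 ε) ε := by
  have hx0 := x0_lt_self hε
  have hsing : IntervalIntegrable (fun x => (x - x0 ε) ^ ((4 + 2 * √3) * ε - 1)) volume
      (x0 ε) ε := by
    have h := (intervalIntegral.intervalIntegrable_rpow' (a := 0) (b := ε - x0 ε)
      (r := (4 + 2 * √3) * ε - 1) (by linarith [show 0 < (4 + 2 * √3) * ε by positivity])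
      ).comp_sub_right (x0 ε)
    rwa [zero_add, sub_add_cancel] at h
  have hreg : ContinuousOn (fun x => 2 * ε ^ 2 * gReg ε x / (gfun ε ε * (x1 ε - x)) * q x)
      (uIcc (x0 ε) ε) := by
    rw [uIcc_of_le hx0.le]
    refine ((continuousOn_const.mul (continuousOn_gReg hε)).div (by fun_prop) ?_).mul hq
    intro y hy
    exact mul_ne_zero (gfun_self_pos hε).ne'
      (sub_pos.2 (hy.2.trans_lt (self_lt_x1 hε))).ne'
  refine (hsing.mul_continuousOn hreg).congr fun y hy => ?_
  rw [uIoc_of_le hx0.le] at hy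
  simp only [wfun_of_mem_Ioc hε hy, mul_assoc]

lemma intervalIntegrable_wfun_mul (hε : 0 < ε) (hε' : ε ≤ 1 / 2) {q : ℝ → ℝ}
    (hq : ContinuousOn q (Icc (x0 ε) (1 - x0 ε))) :
    IntervalIntegrable (fun x => wfun ε x * q x) volume (x0 ε) (1 - x0 ε) := by
  have hx0 := x0_lt_self hε
  have hleft := intervalIntegrable_wfun_mul_left hε (hq.mono (Icc_subset_Icc_right (by linarith)))
  have hmid : IntervalIntegrable (fun x => wfun ε x * q x) volume ε (1 - ε) := by
    refine (ContinuousOn.intervalIntegrable (u := q) ?_).congr fun y hy => ?_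
    · rw [uIcc_of_le (by linarith)]
      exact hq.mono (Icc_subset_Icc hx0.le (by linarith))
    · rw [uIoc_of_le (by linarith)] at hy
      rw [wfun_of_mem_Icc hε ⟨hy.1.le, hy.2⟩, one_mul]
  have hright : IntervalIntegrable (fun x => wfun ε x * q x) volume (1 - ε) (1 - x0 ε) := by
    have h := (intervalIntegrable_wfun_mul_left hε (q := fun y => q (1 - y))
      (hq.comp (continuousOn_const.sub continuousOn_id)
        fun y hy => ⟨by linarith [hy.2], by linarith [hy.1]⟩)).comp_sub_left 1
    simp only [wfun_one_sub hε hε', sub_sub_cancel] at h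
    exact h.symm
  exact (hleft.trans hmid).trans hright

end

theorem stmt9 :
    ∃ ε₀ > (0:ℝ), ∀ ε : ℝ, 0 < ε → ε ≤ ε₀ →
      ∀ (lam₁ lam₂ : ℝ) (u₁ u₁' u₁'' u₂ u₂' u₂'' : ℝ → ℝ),
        lam₁ ≠ lam₂ →
        (∀ x ∈ Icc (0:ℝ) 1, HasDerivAt u₁ (u₁' x) x) →
        (∀ x ∈ Icc (0:ℝ) 1, HasDerivAt u₁' (u₁'' x) x) →
        ContinuousOn u₁'' (Icc 0 1) →
        (∀ x ∈ Icc (0:ℝ) 1, phi2 ε x * u₁'' x + phi1 ε x * u₁' x = lam₁ * u₁ x) →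
        (∀ x ∈ Icc (0:ℝ) 1, HasDerivAt u₂ (u₂' x) x) →
        (∀ x ∈ Icc (0:ℝ) 1, HasDerivAt u₂' (u₂'' x) x) →
        ContinuousOn u₂'' (Icc 0 1) →
        (∀ x ∈ Icc (0:ℝ) 1, phi2 ε x * u₂'' x + phi1 ε x * u₂' x = lam₂ * u₂ x) →
        (∫ x in (x0 ε)..(1 - x0 ε), wfun ε x * u₁ x * u₂ x) = 0 := by
  refine ⟨1 / 2, by norm_num, fun ε hε hε' lam₁ lam₂ u₁ u₁' u₁'' u₂ u₂' u₂'' hne hu₁ hu₁' _ hode₁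
    hu₂ hu₂' _ hode₂ => ?_⟩
  have hx0 := x0_pos hε
  have hsub : Icc (x0 ε) (1 - x0 ε) ⊆ Icc 0 1 := Icc_subset_Icc hx0.le (by linarith)
  have hsub' : Ioo (x0 ε) (1 - x0 ε) \ {ε, 1 - ε} ⊆ Icc 0 1 :=
    sdiff_subset.trans (Ioo_subset_Icc_self.trans hsub)
  have hcont : ContinuousOn (fun x => u₁ x * u₂ x) (Icc (x0 ε) (1 - x0 ε)) := fun x hx =>
    ((hu₁ x (hsub hx)).continuousAt.mul (hu₂ x (hsub hx)).continuousAt).continuousWithinAt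
  refine integral_weight_mul_mul_eq_zero_of_eigenvalue_ne (by linarith [x0_lt_self hε])
    ((Set.toFinite _).countable) hne (continuousOn_pfun hε hε') (pfun_x0 hε)
    (pfun_one_sub_x0 hε hε') (fun x hx => hasDerivAt_pfun hε hε' hx)
    (fun x hx => (phi2_neg hε hε' hx.1).ne)
    (fun x hx => hu₁ x (hsub hx)) (fun x hx => hu₁' x (hsub hx))
    (fun x hx => hu₂ x (hsub hx)) (fun x hx => hu₂' x (hsub hx))
    (fun x hx => hode₁ x (hsub' hx)) (fun x hx => hode₂ x (hsub' hx)) ?_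
  simpa only [wfun, mul_assoc] using intervalIntegrable_wfun_mul hε hε' hcont
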